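/- Coupling barycentre Lipschitz bound: let ρ be a Borel probability measure on ℝ^d with ∫ ‖x‖² dρ < ∞, let σ : ℝ → ℝ be Lipschitz with constant L, and fix R > 0. Then there exists a constant C > 0 (depending only on L, |σ(0)|, R, and ∫‖x‖² dρ) with the following property: for all Borel probability measures μ, ν on ℝ^d × ℝ × ℝ supported in the closed ball of radius R, and every coupling γ of μ and ν (a probability measure on the product whose first marginal is μ and second marginal is ν), the barycentre functions f_μ(x) = ∫ a·σ(⟨w, x⟩ + b) dμ(w, b, a) and f_ν satisfy (∫ |f_μ(x) − f_ν(x)|² dρ(x))^{1/2} ≤ C·(∫ ‖θ − θ'‖² dγ(θ, θ'))^{1/2}. -/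

import Mathlib

/-!
On the ball of radius `R`, the feature map `θ = (w, b, a) ↦ a σ(⟪w, x⟫ + b)` is Lipschitz
with constant `(2RL + |σ 0|)(1 + ‖x‖)`. Integrating against a coupling `γ` (the easy
direction of Kantorovich–Rubinstein) bounds `|f_μ x - f_ν x|` by this constant times
`∫ ‖θ - θ'‖ dγ`, which Jensen bounds by `(∫ ‖θ - θ'‖² dγ)^(1/2)`. Squaring and integrating
in `x` costs the factor `(∫ (1 + ‖x‖)² dρ)^(1/2)`, finite by the second-moment assumption.
-/

open MeasureTheory Real
open scoped RealInnerProductSpace NNReal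

section Coupling

variable {α : Type*} [MeasurableSpace α]

theorem abs_integral_sub_integral_le_of_coupling [SeminormedAddCommGroup α]
    {μ ν : Measure α} {γ : Measure (α × α)} (hγμ : γ.map Prod.fst = μ)
    (hγν : γ.map Prod.snd = ν) {S : Set α} (hμS : ∀ᵐ a ∂μ, a ∈ S)
    (hνS : ∀ᵐ a ∂ν, a ∈ S)
    {φ : α → ℝ} {c : ℝ} (hφ : ∀ a ∈ S, ∀ b ∈ S, |φ a - φ b| ≤ c * ‖a - b‖)
    (hφμ : Integrable φ μ) (hφν : Integrable φ ν)
    (hγ : Integrable (fun p : α × α => ‖p.1 - p.2‖) γ) :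
    |∫ a, φ a ∂μ - ∫ a, φ a ∂ν| ≤ c * ∫ p, ‖p.1 - p.2‖ ∂γ := by
  subst hγμ hγν
  have h₁ : Integrable (fun p : α × α => φ p.1) γ := hφμ.comp_measurable measurable_fst
  have h₂ : Integrable (fun p : α × α => φ p.2) γ := hφν.comp_measurable measurable_snd
  have hS : ∀ᵐ p ∂γ, p.1 ∈ S ∧ p.2 ∈ S :=
    (ae_of_ae_map measurable_fst.aemeasurable hμS).and
      (ae_of_ae_map measurable_snd.aemeasurable hνS)
  rw [integral_map measurable_fst.aemeasurable hφμ.aestronglyMeasurable,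
    integral_map measurable_snd.aemeasurable hφν.aestronglyMeasurable,
    ← integral_sub h₁ h₂, ← integral_const_mul]
  refine abs_integral_le_integral_abs.trans (integral_mono_ae (h₁.sub h₂).abs
    (hγ.const_mul c) ?_)
  filter_upwards [hS] with p hp using hφ _ hp.1 _ hp.2

theorem integral_le_sqrt_integral_sq {μ : Measure α} [IsProbabilityMeasure μ] {f : α → ℝ}
    (hf : MemLp f 2 μ) : ∫ a, f a ∂μ ≤ √(∫ a, f a ^ 2 ∂μ) := by
  have hvar := ProbabilityTheory.variance_nonneg f μ
  rw [ProbabilityTheory.variance_eq_sub hf] at hvar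
  exact (le_abs_self _).trans (Real.abs_le_sqrt (by simpa using hvar))

theorem sqrt_integral_sq_le_of_abs_le {ρ : Measure α} {F g : α → ℝ} {c : ℝ} (hc : 0 ≤ c)
    (hg : Integrable (fun x => g x ^ 2) ρ) (hF : ∀ x, |F x| ≤ c * g x) :
    √(∫ x, |F x| ^ 2 ∂ρ) ≤ c * √(∫ x, g x ^ 2 ∂ρ) := by
  have hmono : ∫ x, |F x| ^ 2 ∂ρ ≤ ∫ x, c ^ 2 * g x ^ 2 ∂ρ :=
    integral_mono_of_nonneg (.of_forall fun x => sq_nonneg _) (hg.const_mul _)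
      (.of_forall fun x => by
        simpa only [mul_pow] using pow_le_pow_left₀ (abs_nonneg _) (hF x) 2)
  rw [integral_const_mul] at hmono
  calc √(∫ x, |F x| ^ 2 ∂ρ) ≤ √(c ^ 2 * ∫ x, g x ^ 2 ∂ρ) := Real.sqrt_le_sqrt hmono
    _ = c * √(∫ x, g x ^ 2 ∂ρ) := by rw [Real.sqrt_mul (sq_nonneg c), Real.sqrt_sq hc]

end Coupling

section FeatureMap

variable {E : Type*} [NormedAddCommGroup E] [InnerProductSpace ℝ E]

def featureMap (σ : ℝ → ℝ) (θ : E × ℝ × ℝ) (x : E) : ℝ :=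
  θ.2.2 * σ (⟪θ.1, x⟫ + θ.2.1)

theorem featureMap_zero (σ : ℝ → ℝ) (x : E) : featureMap σ 0 x = 0 := by
  simp [featureMap]

theorem continuous_featureMap {σ : ℝ → ℝ} (hσ : Continuous σ) (x : E) :
    Continuous fun θ : E × ℝ × ℝ => featureMap σ θ x := by
  unfold featureMap; fun_prop

theorem abs_inner_add_le_norm_mul (θ : E × ℝ × ℝ) (x : E) :
    |⟪θ.1, x⟫ + θ.2.1| ≤ ‖θ‖ * (1 + ‖x‖) := by
  have hw : |⟪θ.1, x⟫| ≤ ‖θ‖ * ‖x‖ := (abs_real_inner_le_norm _ _).trans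
    (mul_le_mul_of_nonneg_right (norm_fst_le θ) (norm_nonneg x))
  have hb : |θ.2.1| ≤ ‖θ‖ := (norm_fst_le θ.2).trans (norm_snd_le θ)
  linarith [abs_add_le ⟪θ.1, x⟫ θ.2.1]

theorem abs_featureMap_sub_le {σ : ℝ → ℝ} {L : ℝ≥0} (hσ : LipschitzWith L σ) {R : ℝ}
    {θ θ' : E × ℝ × ℝ} (hθ : ‖θ‖ ≤ R) (hθ' : ‖θ'‖ ≤ R) (x : E) :
    |featureMap σ θ x - featureMap σ θ' x| ≤
      (2 * R * L + |σ 0|) * (1 + ‖x‖) * ‖θ - θ'‖ := by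
  set u := ⟪θ.1, x⟫ + θ.2.1
  set u' := ⟪θ'.1, x⟫ + θ'.2.1
  set D := ‖θ - θ'‖
  set t := 1 + ‖x‖
  have hR : 0 ≤ R := (norm_nonneg θ).trans hθ
  have hD : 0 ≤ D := norm_nonneg _
  have ht : 1 ≤ t := le_add_of_nonneg_right (norm_nonneg x)
  have ha : |θ.2.2| ≤ R := ((norm_snd_le θ.2).trans (norm_snd_le θ)).trans hθ
  have hda : |θ.2.2 - θ'.2.2| ≤ D :=
    (norm_snd_le (θ - θ').2).trans (norm_snd_le (θ - θ'))
  have hdu : |u - u'| ≤ D * t := by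
    have : u - u' = ⟪(θ - θ').1, x⟫ + (θ - θ').2.1 := by
      simp only [u, u', Prod.fst_sub, Prod.snd_sub, inner_sub_left]; ring
    exact this ▸ abs_inner_add_le_norm_mul (θ - θ') x
  have hdσ : |σ u - σ u'| ≤ L * (D * t) := by
    simpa [Real.dist_eq] using (hσ.dist_le_mul u u').trans
      (mul_le_mul_of_nonneg_left hdu L.coe_nonneg)
  have hσu' : |σ u'| ≤ |σ 0| + L * (R * t) := by
    have h := hσ.dist_le_mul u' 0
    have hu' : |u'| ≤ R * t :=
      (abs_inner_add_le_norm_mul θ' x).trans (mul_le_mul_of_nonneg_right hθ' (by positivity))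
    rw [Real.dist_eq, Real.dist_eq, sub_zero] at h
    linarith [abs_sub_abs_le_abs_sub (σ u') (σ 0),
      mul_le_mul_of_nonneg_left hu' L.coe_nonneg]
  calc |θ.2.2 * σ u - θ'.2.2 * σ u'|
      = |θ.2.2 * (σ u - σ u') + (θ.2.2 - θ'.2.2) * σ u'| := by ring_nf
    _ ≤ |θ.2.2| * |σ u - σ u'| + |θ.2.2 - θ'.2.2| * |σ u'| := by
        rw [← abs_mul, ← abs_mul]; exact abs_add_le _ _
    _ ≤ R * (L * (D * t)) + D * (|σ 0| + L * (R * t)) := by gcongr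
    _ ≤ (2 * R * L + |σ 0|) * t * D := by
        linarith [mul_le_mul_of_nonneg_left ht (mul_nonneg (abs_nonneg (σ 0)) hD)]

theorem integrable_featureMap [MeasurableSpace E] [BorelSpace E] [SecondCountableTopology E]
    {σ : ℝ → ℝ} {L : ℝ≥0} (hσ : LipschitzWith L σ) {R : ℝ}
    {μ : Measure (E × ℝ × ℝ)} [IsFiniteMeasure μ]
    (hμ : ∀ᵐ θ ∂μ, θ ∈ Metric.closedBall 0 R) (x : E) :
    Integrable (fun θ => featureMap σ θ x) μ := by
  refine .mono' (integrable_const ((2 * R * L + |σ 0|) * (1 + ‖x‖) * R))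
    (continuous_featureMap hσ.continuous x).aestronglyMeasurable ?_
  filter_upwards [hμ] with θ hθ
  rw [mem_closedBall_zero_iff] at hθ
  have hR : 0 ≤ R := (norm_nonneg θ).trans hθ
  have h := abs_featureMap_sub_le hσ hθ (norm_zero.trans_le hR) x
  rw [featureMap_zero, sub_zero, sub_zero] at h
  exact h.trans (by gcongr)

end FeatureMap

/-- Coupling barycentre Lipschitz bound: for parameter measures `μ, ν` supported in the
closed ball of radius `R`, any coupling `γ` of `μ` and `ν`, a Lipschitz activation `σ`,
and a data law `ρ` with finite second moment, the `L²(ρ)` distance between the barycentre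
network functions `f_μ` and `f_ν` is bounded by `C` times the coupling cost
`(∫‖θ − θ'‖² dγ)^{1/2}`. -/
theorem coupling_barycentre_lipschitz
    (d : ℕ) (ρ : Measure (EuclideanSpace ℝ (Fin d))) [IsProbabilityMeasure ρ]
    (hmom : Integrable (fun x => ‖x‖ ^ 2) ρ)
    (σ : ℝ → ℝ) (L : ℝ≥0) (hσ : LipschitzWith L σ)
    (R : ℝ) (hR : 0 < R) :
    ∃ C : ℝ, 0 < C ∧
      ∀ (μ ν : Measure ((EuclideanSpace ℝ (Fin d)) × ℝ × ℝ))
        (_ : IsProbabilityMeasure μ) (_ : IsProbabilityMeasure ν),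
        (∀ᵐ θ ∂μ, θ ∈ Metric.closedBall (0 : (EuclideanSpace ℝ (Fin d)) × ℝ × ℝ) R) →
        (∀ᵐ θ ∂ν, θ ∈ Metric.closedBall (0 : (EuclideanSpace ℝ (Fin d)) × ℝ × ℝ) R) →
        ∀ γ : Measure (((EuclideanSpace ℝ (Fin d)) × ℝ × ℝ) ×
            ((EuclideanSpace ℝ (Fin d)) × ℝ × ℝ)),
          IsProbabilityMeasure γ →
          γ.map Prod.fst = μ → γ.map Prod.snd = ν →
          (∫ x,
              |(∫ θ, θ.2.2 * σ (⟪θ.1, x⟫ + θ.2.1) ∂μ) -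
                (∫ θ, θ.2.2 * σ (⟪θ.1, x⟫ + θ.2.1) ∂ν)| ^ 2 ∂ρ) ^ ((1 : ℝ) / 2) ≤
            C * (∫ p, ‖p.1 - p.2‖ ^ 2 ∂γ) ^ ((1 : ℝ) / 2) := by
  set K := 2 * R * L + |σ 0|
  set M := ∫ x, (1 + ‖x‖) ^ 2 ∂ρ
  refine ⟨K * √M + 1, by positivity, ?_⟩
  intro μ ν _ _ hμ hν γ _ hγμ hγν
  simp only [← Real.sqrt_eq_rpow]
  have hγ : ∀ᵐ p ∂γ, ‖p.1‖ ≤ R ∧ ‖p.2‖ ≤ R := by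
    rw [← hγμ] at hμ; rw [← hγν] at hν
    filter_upwards [ae_of_ae_map measurable_fst.aemeasurable hμ,
      ae_of_ae_map measurable_snd.aemeasurable hν] with p h₁ h₂
    exact ⟨mem_closedBall_zero_iff.1 h₁, mem_closedBall_zero_iff.1 h₂⟩
  have hdist : MemLp (fun p : _ × _ => ‖p.1 - p.2‖) 2 γ := by
    refine .of_bound (by fun_prop) (R + R) ?_
    filter_upwards [hγ] with p hp
    rw [norm_norm]; exact (norm_sub_le _ _).trans (add_le_add hp.1 hp.2)
  have hpointwise : ∀ x, |∫ θ, featureMap σ θ x ∂μ - ∫ θ, featureMap σ θ x ∂ν| ≤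
      (K * ∫ p, ‖p.1 - p.2‖ ∂γ) * (1 + ‖x‖) := fun x => by
    rw [mul_right_comm]
    exact abs_integral_sub_integral_le_of_coupling hγμ hγν hμ hν
      (fun θ hθ θ' hθ' => abs_featureMap_sub_le hσ (mem_closedBall_zero_iff.1 hθ)
        (mem_closedBall_zero_iff.1 hθ') x)
      (integrable_featureMap hσ hμ x) (integrable_featureMap hσ hν x)
      (hdist.integrable one_le_two)
  have hM : Integrable (fun x => (1 + ‖x‖) ^ 2) ρ := by
    have hnorm : MemLp (fun x => ‖x‖) 2 ρ := (memLp_two_iff_integrable_sq (by fun_prop)).2 hmom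
    exact ((memLp_const (1 : ℝ)).add hnorm).integrable_sq
  calc √(∫ x, |∫ θ, featureMap σ θ x ∂μ - ∫ θ, featureMap σ θ x ∂ν| ^ 2 ∂ρ)
      ≤ (K * ∫ p, ‖p.1 - p.2‖ ∂γ) * √M :=
        sqrt_integral_sq_le_of_abs_le (by positivity) hM hpointwise
    _ ≤ K * √M * √(∫ p, ‖p.1 - p.2‖ ^ 2 ∂γ) := by
        rw [mul_right_comm]; gcongr; exact integral_le_sqrt_integral_sq hdist
    _ ≤ (K * √M + 1) * √(∫ p, ‖p.1 - p.2‖ ^ 2 ∂γ) := by gcongr; linarith
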